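/- arXiv:2103.16659 — 5 statements merged into one kernel-verified Lean document; each statement's English description precedes it below -/
import Mathlib

section
/- If d and r are vectors in R^n with r^T d = 0, λ > 0, H is a symmetric matrix satisfying g + (H + λI)d = r and d^T (H + λI) d ≥ 0, then the quadratic model decrease satisfies q(0) - q(d) ≥ (1/2) λ ‖d‖², where q(d) = f + g^T d + (1/2) d^T H d. -/
open scoped RealInnerProductSpace

/-!
Writing the stationarity condition as `g = r - (H + λ I) d` and using `r ⟂ d` gives
`⟪g, d⟫ = -⟪d, (H + λ I) d⟫`, so `q 0 - q d = ½ ⟪d, (H + λ I) d⟫ + ½ λ ‖d‖²`, and the first term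
is nonnegative by the curvature condition.
-/

section QuadraticModel

variable {E : Type*} [NormedAddCommGroup E] [InnerProductSpace ℝ E]

noncomputable def quadraticModel (f : ℝ) (g : E) (H : E → E) (u : E) : ℝ :=
  f + ⟪g, u⟫ + (1/2) * ⟪u, H u⟫

theorem inner_eq_neg_of_add_eq_of_inner_eq_zero {g v r d : E} (heq : g + v = r)
    (hrd : ⟪r, d⟫ = 0) : ⟪g, d⟫ = -⟪v, d⟫ := by
  rw [eq_sub_of_add_eq heq, inner_sub_left, hrd, zero_sub]

theorem quadraticModel_zero_sub_eq (f lam : ℝ) (g d : E) (H : E → E)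
    (hgd : ⟪g, d⟫ = -⟪d, H d + lam • d⟫) :
    quadraticModel f g H 0 - quadraticModel f g H d
      = (1/2) * ⟪d, H d + lam • d⟫ + (1/2) * lam * ‖d‖^2 := by
  have hdd : ⟪d, H d + lam • d⟫ = ⟪d, H d⟫ + lam * ‖d‖^2 := by
    rw [inner_add_right, real_inner_smul_right, real_inner_self_eq_norm_sq]
  simp only [quadraticModel, inner_zero_left, inner_zero_right, hgd]
  linarith

end QuadraticModel

theorem stmt0_general (n : ℕ) (g d r : EuclideanSpace ℝ (Fin n))
    (H : EuclideanSpace ℝ (Fin n) →L[ℝ] EuclideanSpace ℝ (Fin n))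
    (lam : ℝ) (f : ℝ)
    (q : EuclideanSpace ℝ (Fin n) → ℝ)
    (hq : ∀ u, q u = f + ⟪g, u⟫ + (1/2) * ⟪u, H u⟫)
    (hrd : ⟪r, d⟫ = 0)
    (heq : g + (H d + lam • d) = r)
    (hcurv : 0 ≤ ⟪d, H d + lam • d⟫) :
    q 0 - q d ≥ (1/2) * lam * ‖d‖^2 := by
  have hq' : q = quadraticModel f g H := funext hq
  have hgd : ⟪g, d⟫ = -⟪d, H d + lam • d⟫ := by
    rw [inner_eq_neg_of_add_eq_of_inner_eq_zero heq hrd, real_inner_comm]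
  rw [hq', quadraticModel_zero_sub_eq f lam g d H hgd]
  linarith

theorem stmt0 (n : ℕ) (g d r : EuclideanSpace ℝ (Fin n))
    (H : EuclideanSpace ℝ (Fin n) →L[ℝ] EuclideanSpace ℝ (Fin n))
    (hH : IsSelfAdjoint H) (lam : ℝ) (hlam : 0 < lam) (f : ℝ)
    (q : EuclideanSpace ℝ (Fin n) → ℝ)
    (hq : ∀ u, q u = f + ⟪g, u⟫ + (1/2) * ⟪u, H u⟫)
    (hrd : ⟪r, d⟫ = 0)
    (heq : g + (H d + lam • d) = r)
    (hcurv : 0 ≤ ⟪d, H d + lam • d⟫) :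
    q 0 - q d ≥ (1/2) * lam * ‖d‖^2 :=
  stmt0_general n g d r H lam f q hq hrd heq hcurv
end

section
/- Under the assumptions g + (H + λI)d = r, r^T d = 0, d^T(H+λI)d ≥ 0, and λ ≥ ‖d‖/(β α) with β ≥ 1 and α > 0, the quadratic model decrease satisfies q(0) - q(d) ≥ ‖d‖³/(2βα). -/
open scoped RealInnerProductSpace

theorem stmt1 (n : ℕ) (g d r : EuclideanSpace ℝ (Fin n))
    (H : EuclideanSpace ℝ (Fin n) →L[ℝ] EuclideanSpace ℝ (Fin n))
    (hH : IsSelfAdjoint H) (lam β α : ℝ) (hlam : 0 < lam)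
    (hβ : 1 ≤ β) (hα : 0 < α) (f : ℝ)
    (q : EuclideanSpace ℝ (Fin n) → ℝ)
    (hq : ∀ u, q u = f + ⟪g, u⟫ + (1/2) * ⟪u, H u⟫)
    (hrd : ⟪r, d⟫ = 0)
    (heq : g + (H d + lam • d) = r)
    (hcurv : 0 ≤ ⟪d, H d + lam • d⟫)
    (hshift : ‖d‖ ≤ lam * β * α) :
    q 0 - q d ≥ ‖d‖^3 / (2 * β * α) := by
  have hgd : ⟪g, d⟫ = -⟪d, H d⟫ - lam * ‖d‖^2 := by
    have h := congrArg (fun u => (⟪u, d⟫ : ℝ)) heq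
    simp only [inner_add_left, inner_smul_left, RCLike.conj_to_real, hrd] at h
    have h1 : ⟪H d, d⟫ = ⟪d, H d⟫ := real_inner_comm _ _
    have h2 : ⟪d, d⟫ = ‖d‖^2 := real_inner_self_eq_norm_sq d
    rw [h1, h2] at h; linarith
  have hq0 : q 0 = f := by simp [hq]
  have hqd : q d = f + ⟪g, d⟫ + (1/2) * ⟪d, H d⟫ := hq d
  have hc : ⟪d, H d + lam • d⟫ = ⟪d, H d⟫ + lam * ‖d‖^2 := by
    rw [inner_add_right, real_inner_smul_right, real_inner_self_eq_norm_sq]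
  have key : q 0 - q d = (1/2) * ⟪d, H d + lam • d⟫ + (lam/2) * ‖d‖^2 := by
    rw [hq0, hqd, hgd, hc]; ring
  rw [key, ge_iff_le, div_le_iff₀ (by positivity)]
  have hn : (0:ℝ) ≤ ‖d‖ := norm_nonneg d
  nlinarith [mul_le_mul_of_nonneg_right hshift (mul_self_nonneg ‖d‖), hcurv,
    mul_pos (mul_pos hlam (lt_of_lt_of_le one_pos hβ)) hα]
end

section
/- Let f be C² with L-Lipschitz Hessian and suppose the quadratic decrease satisfies Δq := q(0) - q(d) ≥ ‖d‖³/(2βα) with β ≥ 1, α > 0, Δq > 0. Then the ratio ρ = (f(x) - f(x+d))/Δq satisfies ρ ≥ 1 - 2Lβα. -/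
open scoped RealInnerProductSpace
open InnerProductSpace Set

/-! Along the line `t ↦ x + t • d`, the derivative of `f` minus its quadratic model is
`⟪∇f (x + t • d) - ∇f x - t • H d, d⟫`, which the Lipschitz bound on the Hessian `H` makes at most
`L ‖d‖³` on `[0, 1]`. Hence `f x - f (x + d) ≥ Δq - L ‖d‖³ ≥ (1 - 2Lβα) Δq`, the last step because
`‖d‖³ ≤ 2βα Δq`. -/

theorem ContDiff.gradient {E : Type*} [NormedAddCommGroup E] [InnerProductSpace ℝ E]
    [CompleteSpace E] {f : E → ℝ} {m n : WithTop ℕ∞} (hf : ContDiff ℝ n f) (hmn : m + 1 ≤ n) :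
    ContDiff ℝ m (gradient f) :=
  (toDual ℝ E).symm.contDiff.comp (hf.fderiv_right hmn)

theorem norm_sub_sub_fderiv_le_of_lipschitz_fderiv {E F : Type*} [NormedAddCommGroup E]
    [NormedSpace ℝ E] [NormedAddCommGroup F] [NormedSpace ℝ F] {g : E → F}
    (hg : Differentiable ℝ g) {L : ℝ} (hL : 0 ≤ L)
    (hLip : ∀ y z, ‖fderiv ℝ g y - fderiv ℝ g z‖ ≤ L * ‖y - z‖) (x y : E) :
    ‖g y - g x - fderiv ℝ g x (y - x)‖ ≤ L * ‖y - x‖ ^ 2 := by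
  have hball : y ∈ Metric.closedBall x ‖y - x‖ := by simp [dist_eq_norm]
  calc ‖g y - g x - fderiv ℝ g x (y - x)‖ ≤ L * ‖y - x‖ * ‖y - x‖ :=
        (convex_closedBall x _).norm_image_sub_le_of_norm_fderiv_le' (fun z _ => hg z)
          (fun z hz => (hLip z x).trans (by
            gcongr; simpa [dist_eq_norm] using hz))
          (Metric.mem_closedBall_self (norm_nonneg _)) hball
    _ = L * ‖y - x‖ ^ 2 := by ring

theorem abs_sub_taylor_two_le_of_lipschitz_hessian {E : Type*} [NormedAddCommGroup E]
    [InnerProductSpace ℝ E] [CompleteSpace E] {f : E → ℝ} (hf : ContDiff ℝ 2 f) {L : ℝ} (hL : 0 ≤ L)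
    (hLip : ∀ y z, ‖fderiv ℝ (gradient f) y - fderiv ℝ (gradient f) z‖ ≤ L * ‖y - z‖)
    (x d : E) :
    |f (x + d) - (f x + ⟪gradient f x, d⟫ + (1/2) * ⟪d, fderiv ℝ (gradient f) x d⟫)|
      ≤ L * ‖d‖ ^ 3 := by
  set H := fderiv ℝ (gradient f) x
  have hgrad : Differentiable ℝ (gradient f) :=
    (hf.gradient (by norm_num)).differentiable one_ne_zero
  let φ : ℝ → ℝ := fun t => f (x + t • d) - t * ⟪gradient f x, d⟫ - t ^ 2 / 2 * ⟪d, H d⟫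
  have hφ : ∀ t : ℝ, HasDerivAt φ
      ⟪gradient f (x + t • d) - gradient f x - H (x + t • d - x), d⟫ t := by
    intro t
    have hline : HasDerivAt (fun t : ℝ => x + t • d) d t := by
      simpa using ((hasDerivAt_id t).smul_const d).const_add x
    have hfline := ((hf.differentiable (by norm_num)) (x + t • d)).hasFDerivAt.comp_hasDerivAt t
      hline
    refine ((hfline.sub ((hasDerivAt_id t).mul_const ⟪gradient f x, d⟫)).sub
      (((hasDerivAt_pow 2 t).div_const 2).mul_const ⟪d, H d⟫)).congr_deriv ?_
    simp only [add_sub_cancel_left, map_smul, inner_sub_left, real_inner_smul_left,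
      inner_gradient_left, real_inner_comm d (H d)]
    norm_num
  have hbound : ∀ t ∈ Ico (0 : ℝ) 1,
      ‖⟪gradient f (x + t • d) - gradient f x - H (x + t • d - x), d⟫‖ ≤ L * ‖d‖ ^ 3 := by
    rintro t ⟨ht0, ht1⟩
    calc _ ≤ ‖gradient f (x + t • d) - gradient f x - H (x + t • d - x)‖ * ‖d‖ :=
          norm_inner_le_norm _ _
      _ ≤ L * ‖x + t • d - x‖ ^ 2 * ‖d‖ := by
          gcongr; exact norm_sub_sub_fderiv_le_of_lipschitz_fderiv hgrad hL hLip x _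
      _ = t ^ 2 * (L * ‖d‖ ^ 3) := by
          rw [add_sub_cancel_left, norm_smul, Real.norm_of_nonneg ht0]; ring
      _ ≤ 1 * (L * ‖d‖ ^ 3) := by gcongr; nlinarith
      _ = L * ‖d‖ ^ 3 := one_mul _
  have hmvt := norm_image_sub_le_of_norm_deriv_le_segment_01'
    (fun t _ => (hφ t).hasDerivWithinAt) hbound
  rw [Real.norm_eq_abs] at hmvt
  convert hmvt using 2
  simp only [φ, one_smul, zero_smul, add_zero]
  ring

theorem stmt3 (n : ℕ) (f : EuclideanSpace ℝ (Fin n) → ℝ) (L : ℝ) (hL : 0 < L)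
    (hf : ContDiff ℝ 2 f)
    (hLip : ∀ y z : EuclideanSpace ℝ (Fin n),
      ‖fderiv ℝ (gradient f) y - fderiv ℝ (gradient f) z‖ ≤ L * ‖y - z‖)
    (x d : EuclideanSpace ℝ (Fin n)) (β α Δq : ℝ) (hβ : 1 ≤ β) (hα : 0 < α)
    (hΔq : Δq = -(⟪gradient f x, d⟫ + (1/2) * ⟪d, fderiv ℝ (gradient f) x d⟫))
    (hlow : ‖d‖^3 / (2 * β * α) ≤ Δq) (hpos : 0 < Δq) :
    (f x - f (x + d)) / Δq ≥ 1 - 2 * L * β * α := by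
  have hdecrease : Δq - L * ‖d‖ ^ 3 ≤ f x - f (x + d) := by
    have := abs_le.1 (abs_sub_taylor_two_le_of_lipschitz_hessian hf hL.le hLip x d)
    linarith
  have hcube : ‖d‖ ^ 3 ≤ 2 * β * α * Δq :=
    (div_le_iff₀' (by positivity)).1 hlow
  rw [ge_iff_le, le_div_iff₀ hpos]
  linarith [mul_le_mul_of_nonneg_left hcube hL.le]
end

section
/- In the CG-Lanczos recurrence, with p_j = σ_j v_j + ω_{j-1} p_{j-1}, r_j = σ_j v_j, M-conjugacy p_j^T M p_{j-1} = 0, orthogonality r_j^T r_{j-1} = 0, δ_j = v_j^T M v_j, and γ_j = 1/(δ_j - ω_{j-1}/γ_{j-1}), one has p_j^T M p_j = σ_j²/γ_j. Hence p_j^T M p_j has the same sign as γ_j. -/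
open scoped RealInnerProductSpace

/-!
Because `p_j = r_j + ω p_{j-1}` is `M`-conjugate to `p_{j-1}`, the curvature `p_jᵀ M p_j` equals
`p_jᵀ M r_j = r_jᵀ M r_j + ω p_{j-1}ᵀ M r_j`. The first term is `σ_j² δ_j`. For the second, the
residual update gives `γ_{j-1} M p_{j-1} = r_{j-1} - r_j`, and orthogonality of consecutive
residuals turns this into `γ_{j-1} p_{j-1}ᵀ M r_j = -‖r_j‖² = -σ_j²`. Hence
`p_jᵀ M p_j = σ_j² (δ_j - ω_{j-1}/γ_{j-1}) = σ_j² / γ_j`.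
-/

namespace CGLanczos

variable {E : Type*} [NormedAddCommGroup E] [InnerProductSpace ℝ E] {T : E →ₗ[ℝ] E}

theorem inner_map_self_of_conj {p r q : E} {ω : ℝ} (hp : p = r + ω • q)
    (hconj : ⟪p, T q⟫ = 0) : ⟪p, T p⟫ = ⟪r, T r⟫ + ω * ⟪q, T r⟫ := by
  subst hp
  simp only [map_add, map_smul, inner_add_left, inner_add_right, real_inner_smul_left,
    real_inner_smul_right] at hconj ⊢
  linear_combination ω * hconj

theorem mul_inner_map_residual (hT : T.IsSymmetric) {r r' q : E} {γ : ℝ}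
    (hr : r = r' - γ • T q) (horth : ⟪r, r'⟫ = 0) : γ * ⟪q, T r⟫ = -‖r‖ ^ 2 := by
  have hstep : γ • T q = r' - r := by rw [hr]; abel
  calc γ * ⟪q, T r⟫ = ⟪γ • T q, r⟫ := by rw [real_inner_smul_left, hT]
    _ = ⟪r' - r, r⟫ := by rw [hstep]
    _ = -‖r‖ ^ 2 := by
      rw [inner_sub_left, real_inner_comm, horth, real_inner_self_eq_norm_sq]; ring

theorem inner_map_search_dir (hT : T.IsSymmetric) {v p q r r' : E} {σ γ ω : ℝ}
    (hrv : r = σ • v) (hv : ‖v‖ = 1) (hp : p = r + ω • q) (hr : r = r' - γ • T q)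
    (hconj : ⟪p, T q⟫ = 0) (horth : ⟪r, r'⟫ = 0) (hγ : γ ≠ 0) :
    ⟪p, T p⟫ = σ ^ 2 * (⟪v, T v⟫ - ω / γ) := by
  have hnorm : ‖r‖ ^ 2 = σ ^ 2 := by rw [hrv, norm_smul, hv, mul_one, Real.norm_eq_abs, sq_abs]
  have hqr : ⟪q, T r⟫ = -σ ^ 2 / γ := by
    rw [eq_div_iff hγ, mul_comm, mul_inner_map_residual hT hr horth, hnorm]
  have hrr : ⟪r, T r⟫ = σ ^ 2 * ⟪v, T v⟫ := by
    rw [hrv, map_smul, real_inner_smul_left, real_inner_smul_right]; ring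
  rw [inner_map_self_of_conj hp hconj, hrr, hqr]
  ring

end CGLanczos

theorem stmt10_general (n : ℕ)
    (M : EuclideanSpace ℝ (Fin n) →L[ℝ] EuclideanSpace ℝ (Fin n))
    (hM : IsSelfAdjoint M)
    (vj pprev pj rprev rj : EuclideanSpace ℝ (Fin n))
    (σj δj γprev γj ωprev : ℝ)
    (hσ : σj ≠ 0) (hγprev : γprev ≠ 0)
    (hrv : rj = σj • vj) (hv : ‖vj‖ = 1)
    (hp : pj = rj + ωprev • pprev)
    (hr : rj = rprev - γprev • M pprev)
    (hconj : ⟪pj, M pprev⟫ = 0)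
    (horth : ⟪rj, rprev⟫ = 0)
    (hδ : δj = ⟪vj, M vj⟫)
    (hγ : γj = 1 / (δj - ωprev / γprev)) :
    ⟪pj, M pj⟫ = σj^2 / γj ∧ (0 < ⟪pj, M pj⟫ ↔ 0 < γj) := by
  have hcurv : ⟪pj, M pj⟫ = σj ^ 2 / γj := by
    calc ⟪pj, M pj⟫ = σj ^ 2 * (⟪vj, M vj⟫ - ωprev / γprev) :=
          CGLanczos.inner_map_search_dir hM.isSymmetric hrv hv hp hr hconj horth hγprev
      _ = σj ^ 2 / γj := by rw [hγ, hδ, div_div_eq_mul_div, div_one]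
  exact ⟨hcurv, hcurv ▸ div_pos_iff_of_pos_left (by positivity)⟩

theorem stmt10 (n : ℕ)
    (M : EuclideanSpace ℝ (Fin n) →L[ℝ] EuclideanSpace ℝ (Fin n))
    (hM : IsSelfAdjoint M)
    (vj pprev pj rprev rj xprev xj : EuclideanSpace ℝ (Fin n))
    (σj δj γprev γj ωprev : ℝ)
    (hσ : σj ≠ 0) (hγprev : γprev ≠ 0) (hγj : γj ≠ 0)
    (hrv : rj = σj • vj) (hv : ‖vj‖ = 1)
    (hp : pj = rj + ωprev • pprev)
    (hx : xj = xprev + γprev • pprev)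
    (hr : rj = rprev - γprev • M pprev)
    (hconj : ⟪pj, M pprev⟫ = 0)
    (horth : ⟪rj, rprev⟫ = 0)
    (hδ : δj = ⟪vj, M vj⟫)
    (hγ : γj = 1 / (δj - ωprev / γprev)) :
    ⟪pj, M pj⟫ = σj^2 / γj ∧ (0 < ⟪pj, M pj⟫ ↔ 0 < γj) :=
  stmt10_general n M hM vj pprev pj rprev rj σj δj γprev γj ωprev hσ hγprev hrv hv hp hr hconj horth
    hδ hγ
end

section
/- If d satisfies g + (H + λI)d = 0, H + λI is positive semidefinite, and λ = ‖d‖/α with α > 0, then d is a global minimizer of the cubic model c(d) = f + g^T d + (1/2)d^T H d + ‖d‖³/(3α). -/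
open scoped RealInnerProductSpace

theorem stmt13 (n : ℕ) (g : EuclideanSpace ℝ (Fin n))
    (H : EuclideanSpace ℝ (Fin n) →L[ℝ] EuclideanSpace ℝ (Fin n))
    (hH : IsSelfAdjoint H) (α : ℝ) (hα : 0 < α) (f : ℝ)
    (d : EuclideanSpace ℝ (Fin n)) (lam : ℝ) (hlam : lam = ‖d‖ / α)
    (heq : g + (H d + lam • d) = 0)
    (hpsd : ∀ w : EuclideanSpace ℝ (Fin n), 0 ≤ ⟪w, H w + lam • w⟫)
    (c : EuclideanSpace ℝ (Fin n) → ℝ)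
    (hc : ∀ u, c u = f + ⟪g, u⟫ + (1/2) * ⟪u, H u⟫ + ‖u‖^3 / (3 * α)) :
    ∀ u, c d ≤ c u := by
  have hsym := (ContinuousLinearMap.isSelfAdjoint_iff_isSymmetric.mp hH)
  intro u
  rw [hc, hc]
  have hg : g = -(H d + lam • d) := by
    have := heq
    exact eq_neg_of_add_eq_zero_left this
  have hdHu : ⟪(H d : EuclideanSpace ℝ (Fin n)), u⟫ = ⟪d, H u⟫ := hsym d u
  have huHd : ⟪u, (H d : EuclideanSpace ℝ (Fin n))⟫ = ⟪d, H u⟫ := by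
    rw [real_inner_comm]; exact hdHu
  have hgu : ⟪g, u⟫ = -⟪d, H u⟫ - lam * ⟪d, u⟫ := by
    rw [hg, inner_neg_left, inner_add_left, inner_smul_left, hdHu]
    simp only [starRingEnd_apply, star_trivial]; ring
  have hgd : ⟪g, d⟫ = -⟪d, H d⟫ - lam * ‖d‖ ^ 2 := by
    rw [hg, inner_neg_left, inner_add_left, inner_smul_left,
      real_inner_comm (H d) d, real_inner_self_eq_norm_sq]
    simp only [starRingEnd_apply, star_trivial]; ring
  have hQ := hpsd (u - d)
  have hQ' : ⟪u - d, H (u - d) + lam • (u - d)⟫ =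
      ⟪u, H u⟫ - 2 * ⟪d, H u⟫ + ⟪d, H d⟫
        + lam * (‖u‖ ^ 2 - 2 * ⟪d, u⟫ + ‖d‖ ^ 2) := by
    rw [inner_add_right, inner_smul_right, map_sub, inner_sub_right, inner_sub_right,
      inner_sub_left, inner_sub_left, inner_sub_left, inner_sub_left,
      huHd, real_inner_comm d u, real_inner_self_eq_norm_sq, real_inner_self_eq_norm_sq]
    ring
  rw [hQ'] at hQ
  have key : (0:ℝ) ≤ ((‖u‖ - ‖d‖) ^ 2 * (2 * ‖u‖ + ‖d‖)) / (6 * α) := by positivity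
  have main : (f + ⟪g, u⟫ + (1/2) * ⟪u, H u⟫ + ‖u‖^3 / (3 * α))
      - (f + ⟪g, d⟫ + (1/2) * ⟪d, H d⟫ + ‖d‖^3 / (3 * α))
      = (⟪u, H u⟫ - 2 * ⟪d, H u⟫ + ⟪d, H d⟫
          + lam * (‖u‖ ^ 2 - 2 * ⟪d, u⟫ + ‖d‖ ^ 2)) / 2
        + ((‖u‖ - ‖d‖) ^ 2 * (2 * ‖u‖ + ‖d‖)) / (6 * α) := by
    rw [hgu, hgd, hlam]
    field_simp
    ring
  linarith [hQ, key]
end
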